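/- arXiv:2411.02008 — 2 statements merged into one kernel-verified Lean document; each statement's English description precedes it below -/
import Mathlib

section
/- Uniform error bound for the compensated convexity upper transform of the maximum function: for every λ > 0 and every y ∈ ℝ^n, −1/(4λ) ≤ M(y) − C_λ(y) ≤ 0; equivalently C_λ(y) − 1/(4λ) ≤ max_{1≤i≤n} y_i ≤ C_λ(y). -/
open scoped BigOperators

/-- The unit simplex `Δ_n` in Euclidean space `ℝ^n`. -/
def unitSimplex (n : ℕ) : Set (EuclideanSpace ℝ (Fin n)) :=
  {x | (∀ i, 0 ≤ x i) ∧ ∑ i, x i = 1}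

/-- The compensated-convexity upper transform of the maximum function:
`C_λ(y) = λ‖y‖² − dist(2λy, Δ_n)²/(4λ) + 1/(4λ)`. -/
noncomputable def Cupper {n : ℕ} (lam : ℝ) (y : EuclideanSpace ℝ (Fin n)) : ℝ :=
  lam * ‖y‖ ^ 2 - (Metric.infDist ((2 * lam) • y) (unitSimplex n)) ^ 2 / (4 * lam) + 1 / (4 * lam)

/-!
Expanding the square, `dist(2λy, x)² = 4λ²‖y‖² − 4λ⟪y, x⟫ + ‖x‖²`. On the simplex `⟪y, x⟫` is a
convex combination of the `y i`, hence at most `M(y)`, and `‖x‖² ≥ 0`; so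
`dist(2λy, Δ_n)² ≥ 4λ²‖y‖² − 4λ M(y)`, which gives `C_λ(y) ≤ M(y) + 1/(4λ)`. At the vertex `e_j` with
`y j = M(y)` the same expansion equals `4λ²‖y‖² − 4λ M(y) + 1`, which gives `M(y) ≤ C_λ(y)`.
-/

theorem Metric.le_infDist_sq {α : Type*} [PseudoMetricSpace α] {s : Set α} {p : α} {c : ℝ}
    (hs : s.Nonempty) (h : ∀ x ∈ s, c ≤ dist p x ^ 2) : c ≤ Metric.infDist p s ^ 2 :=
  (Real.sqrt_le_iff.mp <| (Metric.le_infDist hs).2 fun x hx ↦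
    Real.sqrt_le_iff.2 ⟨dist_nonneg, h x hx⟩).2

theorem Metric.infDist_sq_le_dist_sq {α : Type*} [PseudoMetricSpace α] {s : Set α} {p x : α}
    (hx : x ∈ s) : Metric.infDist p s ^ 2 ≤ dist p x ^ 2 :=
  pow_le_pow_left₀ Metric.infDist_nonneg (Metric.infDist_le_dist_of_mem hx) 2

theorem dist_smul_sq {E : Type*} [NormedAddCommGroup E] [InnerProductSpace ℝ E] (a : ℝ) (y x : E) :
    dist (a • y) x ^ 2 = a ^ 2 * ‖y‖ ^ 2 - 2 * a * inner ℝ y x + ‖x‖ ^ 2 := by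
  rw [dist_eq_norm, norm_sub_sq_real, norm_smul, mul_pow, Real.norm_eq_abs, sq_abs,
    real_inner_smul_left]
  ring

theorem single_mem_unitSimplex {n : ℕ} (j : Fin n) : EuclideanSpace.single j 1 ∈ unitSimplex n := by
  refine ⟨fun i ↦ ?_, ?_⟩
  · rw [PiLp.single_apply]
    split_ifs <;> norm_num
  · simp

theorem inner_le_iSup_of_mem_unitSimplex {n : ℕ} (y : EuclideanSpace ℝ (Fin n))
    {x : EuclideanSpace ℝ (Fin n)} (hx : x ∈ unitSimplex n) : inner ℝ y x ≤ ⨆ i, y i := by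
  calc inner ℝ y x = ∑ i, x i * y i := by simp [PiLp.inner_apply]
    _ ≤ ∑ i, x i * ⨆ i, y i :=
      Finset.sum_le_sum fun i _ ↦ mul_le_mul_of_nonneg_left (Finite.le_ciSup y i) (hx.1 i)
    _ = ⨆ i, y i := by rw [← Finset.sum_mul, hx.2, one_mul]

theorem le_infDist_unitSimplex_sq {n : ℕ} (hn : 0 < n) (lam : ℝ) (hlam : 0 ≤ lam)
    (y : EuclideanSpace ℝ (Fin n)) :
    4 * lam ^ 2 * ‖y‖ ^ 2 - 4 * lam * (⨆ i, y i) ≤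
      Metric.infDist ((2 * lam) • y) (unitSimplex n) ^ 2 := by
  refine Metric.le_infDist_sq ⟨_, single_mem_unitSimplex ⟨0, hn⟩⟩ fun x hx ↦ ?_
  have hinner := inner_le_iSup_of_mem_unitSimplex y hx
  rw [dist_smul_sq]
  nlinarith [sq_nonneg ‖x‖, mul_le_mul_of_nonneg_left hinner hlam]

theorem infDist_unitSimplex_sq_le {n : ℕ} (hn : 0 < n) (lam : ℝ) (y : EuclideanSpace ℝ (Fin n)) :
    Metric.infDist ((2 * lam) • y) (unitSimplex n) ^ 2 ≤
      4 * lam ^ 2 * ‖y‖ ^ 2 - 4 * lam * (⨆ i, y i) + 1 := by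
  have : Nonempty (Fin n) := Fin.pos_iff_nonempty.mp hn
  obtain ⟨j, hj⟩ := exists_eq_ciSup_of_finite (f := fun i ↦ y i)
  calc _ ≤ dist ((2 * lam) • y) (EuclideanSpace.single j 1) ^ 2 :=
        Metric.infDist_sq_le_dist_sq (single_mem_unitSimplex j)
    _ = _ := by
      rw [dist_smul_sq, EuclideanSpace.inner_single_right, PiLp.norm_single, ← hj]
      simp only [conj_trivial, one_mul, norm_one]
      ring

/-- Uniform error bound: `−1/(4λ) ≤ M(y) − C_λ(y) ≤ 0` for every `λ > 0` and `y ∈ ℝ^n`,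
where `M(y) = max_i y_i`. -/
theorem stmt4 {n : ℕ} (hn : 0 < n) (lam : ℝ) (hlam : 0 < lam)
    (y : EuclideanSpace ℝ (Fin n)) :
    -(1 / (4 * lam)) ≤ (⨆ i, y i) - Cupper lam y ∧ (⨆ i, y i) - Cupper lam y ≤ 0 := by
  have hlow := le_infDist_unitSimplex_sq hn lam hlam.le y
  have hup := infDist_unitSimplex_sq_le hn lam y
  have hgap : (⨆ i, y i) - Cupper lam y =
      (Metric.infDist ((2 * lam) • y) (unitSimplex n) ^ 2 -
        (4 * lam ^ 2 * ‖y‖ ^ 2 - 4 * lam * (⨆ i, y i) + 1)) / (4 * lam) := by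
    rw [Cupper]
    field_simp
    ring
  have h4 : 0 < 4 * lam := by positivity
  rw [hgap]
  constructor
  · rw [← neg_div]
    exact div_le_div_of_nonneg_right (by linarith) h4.le
  · exact div_nonpos_of_nonpos_of_nonneg (by linarith) h4.le
end

section
/- For every λ > 0, the compensated-convexity upper transform C_λ of the maximum function is differentiable on ℝ^n, and its gradient at y equals the unique nearest point in Δ_n to 2λy: ∇C_λ(y) = p(2λy), where p(2λy) ∈ Δ_n is the unique point satisfying ‖2λy − p(2λy)‖ = dist(2λy, Δ_n). -/
/-!
The variational inequality `⟪x - p, w - p⟫ ≤ 0` characterising a nearest point `p` of a closed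
convex set `K` makes the nearest-point map nonexpansive. Comparing `x'` with `p` and `x` with the
nearest point `p'` of `x'` then traps `infDist x' K ^ 2` within `‖x' - x‖ ^ 2` of its linearisation
`infDist x K ^ 2 + 2 ⟪x - p, x' - x⟫`, so `infDist · K ^ 2` has gradient `2 (x - p)`. By the chain
rule, `∇C_λ(y) = 2λy - (2λy - p) = p`.
-/

open scoped BigOperators

open Metric Filter Topology Asymptotics
open scoped RealInnerProductSpace

section NearestPoint

variable {E : Type*} [NormedAddCommGroup E] [InnerProductSpace ℝ E] {K : Set E}

theorem hasGradientAt_of_abs_sub_inner_le [CompleteSpace E] {f : E → ℝ} {g x : E} (C : ℝ)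
    (hf : ∀ x', |f x' - f x - ⟪g, x' - x⟫| ≤ C * ‖x' - x‖ ^ 2) : HasGradientAt f g x := by
  rw [hasGradientAt_iff_isLittleO]
  have hsq : (fun x' => ‖x' - x‖ ^ 2) =o[𝓝 x] fun x' => x' - x :=
    (isLittleO_norm_pow_id one_lt_two).comp_tendsto (tendsto_sub_nhds_zero_iff.2 tendsto_id)
  refine (IsBigO.of_bound C (Eventually.of_forall fun x' => ?_)).trans_isLittleO hsq
  simpa only [Real.norm_eq_abs, abs_pow, abs_norm] using hf x'

theorem norm_sub_eq_infDist_iff_inner_le_zero (hK : Convex ℝ K) {x p : E} (hp : p ∈ K) :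
    ‖x - p‖ = infDist x K ↔ ∀ w ∈ K, ⟪x - p, w - p⟫ ≤ 0 := by
  simpa only [infDist_eq_iInf, dist_eq_norm] using norm_eq_iInf_iff_real_inner_le_zero hK hp

theorem exists_norm_sub_eq_infDist (hne : K.Nonempty) (hc : IsComplete K) (hK : Convex ℝ K)
    (x : E) : ∃ p ∈ K, ‖x - p‖ = infDist x K := by
  simpa only [infDist_eq_iInf, dist_eq_norm] using
    exists_norm_eq_iInf_of_complete_convex hne hc hK x

variable {x x' p p' : E}

theorem norm_sub_sq_le_inner_of_norm_sub_eq_infDist (hK : Convex ℝ K) (hp : p ∈ K)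
    (hp' : p' ∈ K) (hx : ‖x - p‖ = infDist x K) (hx' : ‖x' - p'‖ = infDist x' K) :
    ‖p - p'‖ ^ 2 ≤ ⟪x - x', p - p'⟫ := by
  have h := (norm_sub_eq_infDist_iff_inner_le_zero hK hp).1 hx p' hp'
  have h' := (norm_sub_eq_infDist_iff_inner_le_zero hK hp').1 hx' p hp
  have hexpand : ⟪x - x', p - p'⟫ = ‖p - p'‖ ^ 2 - ⟪x - p, p' - p⟫ - ⟪x' - p', p - p'⟫ := by
    rw [← real_inner_self_eq_norm_sq]
    simp only [inner_sub_left, inner_sub_right, real_inner_comm]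
    ring
  linarith

theorem norm_sub_le_of_norm_sub_eq_infDist (hK : Convex ℝ K) (hp : p ∈ K) (hp' : p' ∈ K)
    (hx : ‖x - p‖ = infDist x K) (hx' : ‖x' - p'‖ = infDist x' K) : ‖p - p'‖ ≤ ‖x - x'‖ := by
  have hfirm := norm_sub_sq_le_inner_of_norm_sub_eq_infDist hK hp hp' hx hx'
  have hcs := real_inner_le_norm (x - x') (p - p')
  nlinarith [norm_nonneg (p - p'), norm_nonneg (x - x')]

theorem eq_of_norm_sub_eq_infDist (hK : Convex ℝ K) (hp : p ∈ K) (hp' : p' ∈ K)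
    (hx : ‖x - p‖ = infDist x K) (hx' : ‖x - p'‖ = infDist x K) : p = p' := by
  simpa [sub_eq_zero] using norm_sub_le_of_norm_sub_eq_infDist hK hp hp' hx hx'

theorem sq_infDist_le (hp : p ∈ K) (hx : ‖x - p‖ = infDist x K) (x' : E) :
    infDist x' K ^ 2 ≤ infDist x K ^ 2 + 2 * ⟪x - p, x' - x⟫ + ‖x' - x‖ ^ 2 := by
  have h : infDist x' K ≤ ‖(x - p) + (x' - x)‖ := by
    rw [add_comm, sub_add_sub_cancel, ← dist_eq_norm]
    exact infDist_le_dist_of_mem hp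
  calc infDist x' K ^ 2 ≤ ‖(x - p) + (x' - x)‖ ^ 2 := by gcongr; exact infDist_nonneg
    _ = _ := by rw [norm_add_sq_real, hx]

theorem le_sq_infDist (hK : Convex ℝ K) (hp : p ∈ K) (hp' : p' ∈ K)
    (hx : ‖x - p‖ = infDist x K) (hx' : ‖x' - p'‖ = infDist x' K) :
    infDist x K ^ 2 + 2 * ⟪x - p, x' - x⟫ - ‖x' - x‖ ^ 2 ≤ infDist x' K ^ 2 := by
  have hback := sq_infDist_le hp' hx' x
  have hlip : ⟪p' - p, x' - x⟫ ≤ ‖x' - x‖ ^ 2 :=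
    calc ⟪p' - p, x' - x⟫ ≤ ‖p' - p‖ * ‖x' - x‖ := real_inner_le_norm _ _
      _ ≤ ‖x' - x‖ * ‖x' - x‖ := by
        gcongr; exact norm_sub_le_of_norm_sub_eq_infDist hK hp' hp hx' hx
      _ = ‖x' - x‖ ^ 2 := (sq _).symm
  have hexpand : ⟪x' - p', x - x'⟫ = -⟪x - p, x' - x⟫ - ‖x' - x‖ ^ 2 + ⟪p' - p, x' - x⟫ := by
    rw [← real_inner_self_eq_norm_sq]
    simp only [inner_sub_left, inner_sub_right, real_inner_comm]
    ring
  rw [norm_sub_rev] at hback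
  linarith

theorem hasGradientAt_sq_infDist [CompleteSpace E] (hK : Convex ℝ K) (hc : IsClosed K)
    (hp : p ∈ K) (hx : ‖x - p‖ = infDist x K) :
    HasGradientAt (fun x => infDist x K ^ 2) ((2 : ℝ) • (x - p)) x := by
  refine hasGradientAt_of_abs_sub_inner_le 1 fun x' => ?_
  obtain ⟨p', hp', hx'⟩ := exists_norm_sub_eq_infDist ⟨p, hp⟩ hc.isComplete hK x'
  rw [real_inner_smul_left, one_mul, abs_le]
  constructor
  · linarith [le_sq_infDist hK hp hp' hx hx']
  · linarith [sq_infDist_le hp hx x']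

end NearestPoint

section UnitSimplex

variable {n : ℕ}

theorem convex_unitSimplex : Convex ℝ (unitSimplex n) :=
  (convex_stdSimplex ℝ (Fin n)).linear_preimage (WithLp.linearEquiv 2 ℝ (Fin n → ℝ)).toLinearMap

theorem isClosed_unitSimplex : IsClosed (unitSimplex n) :=
  (isClosed_stdSimplex ℝ (Fin n)).preimage (PiLp.continuous_ofLp 2 _)

theorem unitSimplex_nonempty (hn : 0 < n) : (unitSimplex n).Nonempty :=
  ⟨EuclideanSpace.single ⟨0, hn⟩ 1, fun i => by simp; split_ifs <;> simp, by simp⟩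

theorem hasGradientAt_Cupper {lam : ℝ} (hlam : lam ≠ 0) {y p : EuclideanSpace ℝ (Fin n)}
    (hp : p ∈ unitSimplex n)
    (hx : ‖(2 * lam) • y - p‖ = infDist ((2 * lam) • y) (unitSimplex n)) :
    HasGradientAt (Cupper lam) p y := by
  have hdist := (hasGradientAt_sq_infDist convex_unitSimplex isClosed_unitSimplex hp hx
    ).hasFDerivAt.comp y ((hasFDerivAt_id y).const_smul (2 * lam))
  have hsum := (((hasStrictFDerivAt_norm_sq y).hasFDerivAt.const_mul lam).sub
    (hdist.mul_const (4 * lam)⁻¹)).add_const (1 / (4 * lam))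
  rw [hasGradientAt_iff_hasFDerivAt]
  refine (hsum.congr_fderiv ?_).congr_of_eventuallyEq (Eventually.of_forall fun y' => ?_)
  · ext v
    simp only [map_smul, map_sub, ContinuousLinearMap.comp_smulₛₗ, Real.ringHom_apply,
      ContinuousLinearMap.comp_id, sub_apply, smul_apply, coe_innerSL_apply, nsmul_eq_mul,
      Nat.cast_ofNat, smul_eq_mul, InnerProductSpace.toDual_apply_apply, mul_inv_rev]
    field_simp
    ring
  · simp [Cupper, div_eq_mul_inv]

end UnitSimplex

/-- `C_λ` is differentiable on `ℝ^n` with `∇C_λ(y) = p(2λy)`, the unique nearest point of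
the unit simplex `Δ_n` to `2λy`. -/
theorem stmt6 {n : ℕ} (hn : 0 < n) (lam : ℝ) (hlam : 0 < lam)
    (y : EuclideanSpace ℝ (Fin n)) :
    (∃! p, p ∈ unitSimplex n ∧
        ‖(2 * lam) • y - p‖ = Metric.infDist ((2 * lam) • y) (unitSimplex n)) ∧
    (∀ p, p ∈ unitSimplex n →
        ‖(2 * lam) • y - p‖ = Metric.infDist ((2 * lam) • y) (unitSimplex n) →
        HasGradientAt (Cupper lam) p y) := by
  obtain ⟨p, hp, hx⟩ := exists_norm_sub_eq_infDist (unitSimplex_nonempty hn)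
    isClosed_unitSimplex.isComplete convex_unitSimplex ((2 * lam) • y)
  exact ⟨⟨p, ⟨hp, hx⟩, fun q ⟨hq, hqx⟩ =>
      eq_of_norm_sub_eq_infDist convex_unitSimplex hq hp hqx hx⟩,
    fun q hq hqx => hasGradientAt_Cupper hlam.ne' hq hqx⟩
end
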